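/- arXiv:2603.05559 — 2 statements merged into one kernel-verified Lean document; each statement's English description precedes it below -/
import Mathlib

section
/- Consider the coupled Markov chain of the time-series-based decision maker. Assume p_A + p_B = 1 and 1/2 < p_A < 1, and let γ ∈ (0,1]. Let μ₁ be the probability vector on S with μ₁(σ,0) = 1/2 for σ ∈ {+1,−1} and μ₁(σ,i) = 0 for i ≠ 0, and define μ_{n+1} = M μ_n for n ≥ 1. Define CDR_n = Σ_{i=−N}^{ℓ} μ_n(+1,i) + Σ_{i=−N}^{−ℓ−1} μ_n(−1,i). Then CDR_n converges as n → ∞ to (2 p_A^{2N+1} − p_A^{N−ℓ}(1−p_A)^{N+ℓ+1} − p_A^{N+ℓ+1}(1−p_A)^{N−ℓ}) / (2 (p_A^{2N+1} − (1−p_A)^{2N+1})). -/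
open Matrix Finset Filter Topology

/-- Threshold index set `{-N, ..., N}`. -/
abbrev Idx (N : ℕ) : Type := {i : ℤ // i ∈ Finset.Icc (-(N : ℤ)) (N : ℤ)}

/-- State space `{+1, -1} × {-N, ..., N}`; `true` encodes `+1`, `false` encodes `-1`. -/
abbrev St (N : ℕ) : Type := Bool × Idx N

/-- The upward-move probability `q(σ, i)`. -/
noncomputable def qfun (pA pB : ℝ) (ℓ : ℤ) (σ : Bool) (i : ℤ) : ℝ :=
  if σ then (if i ≤ ℓ then 1 - pA else pB) else (if i ≤ -ℓ - 1 then 1 - pA else pB)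

/-- The 2×2 signal-flip matrix `Γ` with diagonal `1 - γ` and off-diagonal `γ`. -/
noncomputable def Gam (γ : ℝ) (τ σ : Bool) : ℝ := if τ = σ then 1 - γ else γ

/-- The transition matrix `M` of the coupled chain `(s_n, θ_n)`:
`M_{(τ,j),(σ,i)} = Γ_{τ,σ} q(σ,i)` if `j = min(i+1, N)`,
`Γ_{τ,σ} (1 - q(σ,i))` if `j = max(i-1, -N)`, `0` otherwise
(coinciding contributions are added). -/
noncomputable def Mmat (N : ℕ) (pA pB γ : ℝ) (ℓ : ℤ) : Matrix (St N) (St N) ℝ :=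
  fun tj si =>
    Gam γ tj.1 si.1 *
      ((if (tj.2 : ℤ) = min ((si.2 : ℤ) + 1) (N : ℤ) then qfun pA pB ℓ si.1 si.2 else 0) +
       (if (tj.2 : ℤ) = max ((si.2 : ℤ) - 1) (-(N : ℤ)) then 1 - qfun pA pB ℓ si.1 si.2 else 0))

/-! With `p_A + p_B = 1` the position moves up with probability `1 - p_A` and down with
probability `p_A` whatever the signal, and since the rows of `Γ` sum to one and the initial law is
symmetric in the signal, both signal slices of `μ_n` coincide with half the law of a biased walk
clamped at `±N`. Hence `CDR_n` is the average of that walk's distribution function at `ℓ` and at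
`-ℓ - 1`. Writing `p = p_A`, the distribution function solves
`F_{n+1}(j) = (1 - p) F_n(j - 1) + p F_n(j + 1)` on `-N ≤ j < N` with fixed boundary values at
`-N - 1` and `N`, as does the gambler's-ruin profile
`G(j) = (p^(2N+1) - (1-p)^(j+N+1) p^(N-j)) / (p^(2N+1) - (1-p)^(2N+1))`; their difference is
bounded by `C ρ ^ n (2p) ^ (-j)` with `ρ = 2p(1 - p) + 1/2 < 1`.
-/

namespace Idx

variable {N : ℕ}

def stepUp (i : Idx N) : Idx N :=
  ⟨min ((i : ℤ) + 1) N, by have := Finset.mem_Icc.mp i.2; rw [Finset.mem_Icc]; omega⟩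

def stepDown (i : Idx N) : Idx N :=
  ⟨max ((i : ℤ) - 1) (-N), by have := Finset.mem_Icc.mp i.2; rw [Finset.mem_Icc]; omega⟩

end Idx

open Idx

noncomputable def walk (N : ℕ) (p : ℝ) : Matrix (Idx N) (Idx N) ℝ :=
  fun j i => (if j = stepUp i then 1 - p else 0) + (if j = stepDown i then p else 0)

noncomputable def cdf {N : ℕ} (v : Idx N → ℝ) (j : ℤ) : ℝ :=
  ∑ i : Idx N, if (i : ℤ) ≤ j then v i else 0

section Walk

variable {N : ℕ} (p : ℝ) (v : Idx N → ℝ)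

theorem cdf_mulVec_walk (j : ℤ) :
    cdf (walk N p *ᵥ v) j = ∑ i : Idx N,
      ((if (stepUp i : ℤ) ≤ j then 1 - p else 0) + (if (stepDown i : ℤ) ≤ j then p else 0)) *
        v i := by
  simp only [cdf, mulVec, dotProduct, walk, ← Finset.sum_filter]
  rw [Finset.sum_comm]
  refine Finset.sum_congr rfl fun i _ => ?_
  simp only [← Finset.sum_mul, Finset.sum_add_distrib, Finset.sum_ite_eq', Finset.mem_filter,
    Finset.mem_univ, true_and]

theorem cdf_mulVec_walk_of_mem {j : ℤ} (hj : -(N : ℤ) ≤ j) (hjN : j < N) :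
    cdf (walk N p *ᵥ v) j = (1 - p) * cdf v (j - 1) + p * cdf v (j + 1) := by
  rw [cdf_mulVec_walk, cdf, cdf, Finset.mul_sum, Finset.mul_sum, ← Finset.sum_add_distrib]
  refine Finset.sum_congr rfl fun i _ => ?_
  have hup : (stepUp i : ℤ) ≤ j ↔ (i : ℤ) ≤ j - 1 := by simp only [stepUp]; omega
  have hdown : (stepDown i : ℤ) ≤ j ↔ (i : ℤ) ≤ j + 1 := by simp only [stepDown]; omega
  simp only [hup, hdown]
  split_ifs <;> ring

theorem cdf_mulVec_walk_top : cdf (walk N p *ᵥ v) N = cdf v N := by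
  rw [cdf_mulVec_walk, cdf]
  refine Finset.sum_congr rfl fun i _ => ?_
  have hi := (Finset.mem_Icc.mp i.2).2
  have hup : (stepUp i : ℤ) ≤ N := min_le_right _ _
  have hdown : (stepDown i : ℤ) ≤ N := by simp only [stepDown]; omega
  simp only [hup, hdown, hi, if_true]
  ring

theorem cdf_bot : cdf v (-N - 1) = 0 :=
  Finset.sum_eq_zero fun i _ => if_neg (by have := (Finset.mem_Icc.mp i.2).1; omega)

end Walk

section Chain

variable {N : ℕ} {pA pB : ℝ} (γ : ℝ) (ℓ : ℤ)

theorem qfun_of_add_eq_one (h : pA + pB = 1) (σ : Bool) (i : ℤ) :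
    qfun pA pB ℓ σ i = 1 - pA := by
  have : pB = 1 - pA := by linarith
  cases σ <;> simp [qfun, this]

theorem sum_Gam (τ : Bool) : ∑ σ, Gam γ τ σ = 1 := by
  cases τ <;> simp [Gam]

theorem Mmat_apply_of_add_eq_one (h : pA + pB = 1) (τ σ : Bool) (j i : Idx N) :
    Mmat N pA pB γ ℓ (τ, j) (σ, i) = Gam γ τ σ * walk N pA j i := by
  simp only [Mmat, walk, qfun_of_add_eq_one ℓ h, Subtype.ext_iff, stepUp, stepDown,
    sub_sub_cancel]

theorem Mmat_mulVec_lift (h : pA + pB = 1) (v : Idx N → ℝ) :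
    Mmat N pA pB γ ℓ *ᵥ (fun si => v si.2) = fun tj => (walk N pA *ᵥ v) tj.2 := by
  ext ⟨τ, j⟩
  simp only [mulVec, dotProduct, Fintype.sum_prod_type, Mmat_apply_of_add_eq_one γ ℓ h, mul_assoc,
    ← Finset.mul_sum, ← Finset.sum_mul, sum_Gam, one_mul]

theorem chain_eq_walk_pow_mulVec (h : pA + pB = 1) (μ : ℕ → St N → ℝ) (u : Idx N → ℝ)
    (hμ1 : ∀ σ i, μ 1 (σ, i) = u i) (hμrec : ∀ n ≥ 1, μ (n + 1) = Mmat N pA pB γ ℓ *ᵥ μ n) :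
    ∀ n, μ (n + 1) = fun si => (walk N pA ^ n *ᵥ u) si.2
  | 0 => funext fun ⟨σ, i⟩ => by simp [hμ1]
  | n + 1 => by
    rw [hμrec (n + 1) (by omega), chain_eq_walk_pow_mulVec h μ u hμ1 hμrec n,
      Mmat_mulVec_lift γ ℓ h, pow_succ', ← mulVec_mulVec]

end Chain

noncomputable def stationaryCdf (N : ℕ) (p : ℝ) (j : ℤ) : ℝ :=
  (p ^ (2 * N + 1) - (1 - p) ^ (j + N + 1) * p ^ ((N : ℤ) - j)) /
    (p ^ (2 * N + 1) - (1 - p) ^ (2 * N + 1))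

section Stationary

variable {N : ℕ} {p : ℝ}

theorem stationaryCdf_harmonic (hp0 : p ≠ 0) (hp1 : 1 - p ≠ 0) (j : ℤ) :
    (1 - p) * stationaryCdf N p (j - 1) + p * stationaryCdf N p (j + 1) = stationaryCdf N p j := by
  simp only [stationaryCdf, ← mul_div_assoc, ← add_div]
  congr 1
  have hq1 : (1 - p) ^ (j + N + 1) = (1 - p) ^ (j - 1 + N + 1) * (1 - p) := by
    rw [← zpow_add_one₀ hp1]; ring_nf
  have hq2 : (1 - p) ^ (j + 1 + N + 1) = (1 - p) ^ (j - 1 + N + 1) * (1 - p) * (1 - p) := by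
    rw [← zpow_add_one₀ hp1, ← zpow_add_one₀ hp1]; ring_nf
  have hp1' : p ^ ((N : ℤ) - (j - 1)) = p ^ ((N : ℤ) - (j + 1)) * p * p := by
    rw [← zpow_add_one₀ hp0, ← zpow_add_one₀ hp0]; ring_nf
  have hp2 : p ^ ((N : ℤ) - j) = p ^ ((N : ℤ) - (j + 1)) * p := by
    rw [← zpow_add_one₀ hp0]; ring_nf
  rw [hq1, hq2, hp1', hp2]
  ring

theorem stationaryCdf_bot : stationaryCdf N p (-N - 1) = 0 := by
  rw [stationaryCdf, div_eq_zero_iff]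
  left
  rw [show -(N : ℤ) - 1 + N + 1 = 0 by ring,
    show (N : ℤ) - (-N - 1) = (2 * N + 1 : ℕ) by push_cast; ring, zpow_zero, zpow_natCast, one_mul,
    sub_self]

theorem stationaryCdf_top (h : p ^ (2 * N + 1) ≠ (1 - p) ^ (2 * N + 1)) :
    stationaryCdf N p N = 1 := by
  rw [stationaryCdf, div_eq_one_iff_eq (sub_ne_zero.mpr h),
    show (N : ℤ) + N + 1 = (2 * N + 1 : ℕ) by push_cast; ring, zpow_natCast, sub_self, zpow_zero,
    mul_one]

theorem stationaryCdf_average (ℓ : ℤ) :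
    (stationaryCdf N p ℓ + stationaryCdf N p (-ℓ - 1)) / 2 =
      (2 * p ^ (2 * N + 1) - p ^ ((N : ℤ) - ℓ) * (1 - p) ^ ((N : ℤ) + ℓ + 1)
        - p ^ ((N : ℤ) + ℓ + 1) * (1 - p) ^ ((N : ℤ) - ℓ))
      / (2 * (p ^ (2 * N + 1) - (1 - p) ^ (2 * N + 1))) := by
  rw [stationaryCdf, stationaryCdf, show -ℓ - 1 + N + 1 = (N : ℤ) - ℓ by ring,
    show (N : ℤ) - (-ℓ - 1) = N + ℓ + 1 by ring, show ℓ + N + 1 = (N : ℤ) + ℓ + 1 by ring,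
    ← add_div, div_div, mul_comm _ (2 : ℝ)]
  ring

end Stationary

theorem abs_le_of_dirichlet {a b : ℤ} {α β ρ C : ℝ} {w : ℤ → ℝ} {e : ℕ → ℤ → ℝ}
    (hα : 0 ≤ α) (hβ : 0 ≤ β) (hρ : 0 ≤ ρ) (hC : 0 ≤ C)
    (hw : ∀ j, a < j → j < b → α * w (j - 1) + β * w (j + 1) ≤ ρ * w j)
    (ha : ∀ n, e n a = 0) (hb : ∀ n, e n b = 0)
    (he : ∀ n j, a < j → j < b → e (n + 1) j = α * e n (j - 1) + β * e n (j + 1))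
    (h0 : ∀ j, a ≤ j → j ≤ b → |e 0 j| ≤ C * w j) :
    ∀ n j, a ≤ j → j ≤ b → |e n j| ≤ C * ρ ^ n * w j := by
  intro n
  induction n with
  | zero => simpa using h0
  | succ n ih =>
    intro j hj₁ hj₂
    have hrhs : C * ρ ^ (n + 1) * w j = ρ * (C * ρ ^ n * w j) := by ring
    have hnonneg : 0 ≤ ρ * (C * ρ ^ n * w j) :=
      mul_nonneg hρ ((abs_nonneg _).trans (ih j hj₁ hj₂))
    rcases hj₁.eq_or_lt with rfl | hj₁
    · rw [ha, abs_zero, hrhs]; exact hnonneg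
    rcases hj₂.eq_or_lt with rfl | hj₂
    · rw [hb, abs_zero, hrhs]; exact hnonneg
    calc |e (n + 1) j| ≤ α * |e n (j - 1)| + β * |e n (j + 1)| := by
          rw [he n j hj₁ hj₂]
          refine (abs_add_le _ _).trans_eq ?_
          rw [abs_mul, abs_mul, abs_of_nonneg hα, abs_of_nonneg hβ]
      _ ≤ α * (C * ρ ^ n * w (j - 1)) + β * (C * ρ ^ n * w (j + 1)) := by
          gcongr
          · exact ih _ (by omega) (by omega)
          · exact ih _ (by omega) (by omega)
      _ = C * ρ ^ n * (α * w (j - 1) + β * w (j + 1)) := by ring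
      _ ≤ C * ρ ^ n * (ρ * w j) := by
          gcongr
          exact hw j hj₁ hj₂
      _ = C * ρ ^ (n + 1) * w j := by ring

theorem tendsto_zero_of_dirichlet {a b : ℤ} {α β ρ : ℝ} {w : ℤ → ℝ} {e : ℕ → ℤ → ℝ}
    (hα : 0 ≤ α) (hβ : 0 ≤ β) (hρ₀ : 0 ≤ ρ) (hρ₁ : ρ < 1)
    (hw_pos : ∀ j, a ≤ j → j ≤ b → 0 < w j)
    (hw : ∀ j, a < j → j < b → α * w (j - 1) + β * w (j + 1) ≤ ρ * w j)
    (ha : ∀ n, e n a = 0) (hb : ∀ n, e n b = 0)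
    (he : ∀ n j, a < j → j < b → e (n + 1) j = α * e n (j - 1) + β * e n (j + 1))
    {j : ℤ} (hj₁ : a ≤ j) (hj₂ : j ≤ b) :
    Tendsto (fun n => e n j) atTop (𝓝 0) := by
  set C := ∑ k ∈ Finset.Icc a b, |e 0 k| / w k
  have hterm : ∀ k ∈ Finset.Icc a b, 0 ≤ |e 0 k| / w k := fun k hk =>
    div_nonneg (abs_nonneg _) (hw_pos k (Finset.mem_Icc.mp hk).1 (Finset.mem_Icc.mp hk).2).le
  have h0 : ∀ k, a ≤ k → k ≤ b → |e 0 k| ≤ C * w k := fun k hk₁ hk₂ =>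
    (div_le_iff₀ (hw_pos k hk₁ hk₂)).mp
      (Finset.single_le_sum hterm (Finset.mem_Icc.mpr ⟨hk₁, hk₂⟩))
  have hbound := abs_le_of_dirichlet hα hβ hρ₀ (Finset.sum_nonneg hterm) hw ha hb he h0
  refine squeeze_zero_norm (fun n => hbound n j hj₁ hj₂) ?_
  simpa using ((tendsto_pow_atTop_nhds_zero_of_lt_one hρ₀ hρ₁).const_mul C).mul_const (w j)

section Convergence

variable {N : ℕ} {p : ℝ}

theorem cdf_walk_pow_mulVec_top (u : Idx N → ℝ) (n : ℕ) : cdf (walk N p ^ n *ᵥ u) N = cdf u N := by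
  induction n with
  | zero => simp
  | succ n ih => rw [pow_succ', ← mulVec_mulVec, cdf_mulVec_walk_top, ih]

/-- For `1 - p < p`, any `t` strictly between `(1 - p) / p` and `1` makes `j ↦ t ^ j` a strict
supersolution of the walk's heat equation; `t = (2p)⁻¹` is the midpoint. -/
theorem weight_step (hp : p ≠ 0) (j : ℤ) :
    (1 - p) * (2 * p) ^ (-(j - 1)) + p * (2 * p) ^ (-(j + 1)) =
      (2 * p * (1 - p) + 1 / 2) * (2 * p) ^ (-j) := by
  have h2p : 2 * p ≠ 0 := mul_ne_zero two_ne_zero hp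
  rw [show -(j - 1) = -j + 1 by ring, show -(j + 1) = -j - 1 by ring, zpow_add_one₀ h2p,
    zpow_sub_one₀ h2p]
  field_simp

theorem tendsto_cdf_walk_pow (hp₁ : 1 / 2 < p) (hp₂ : p < 1) (u : Idx N → ℝ) {j : ℤ}
    (hj₁ : -(N : ℤ) - 1 ≤ j) (hj₂ : j ≤ N) :
    Tendsto (fun n => cdf (walk N p ^ n *ᵥ u) j) atTop (𝓝 (cdf u N * stationaryCdf N p j)) := by
  have hp0 : p ≠ 0 := by positivity
  have hq0 : 1 - p ≠ 0 := by linarith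
  have hpow : p ^ (2 * N + 1) ≠ (1 - p) ^ (2 * N + 1) :=
    (pow_lt_pow_left₀ (by linarith) (by linarith) (by omega)).ne'
  have he := tendsto_zero_of_dirichlet (a := -N - 1) (b := N) (w := fun k => (2 * p) ^ (-k))
    (e := fun n k => cdf (walk N p ^ n *ᵥ u) k - cdf u N * stationaryCdf N p k)
    (by linarith : (0 : ℝ) ≤ 1 - p) (by linarith : (0 : ℝ) ≤ p) (by positivity)
    (by nlinarith [sq_pos_of_pos (by linarith : (0 : ℝ) < 2 * p - 1)])
    (fun k _ _ => by positivity) (fun k _ _ => (weight_step hp0 k).le)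
    (fun n => by simp only [cdf_bot, stationaryCdf_bot, mul_zero, sub_zero])
    (fun n => by rw [cdf_walk_pow_mulVec_top, stationaryCdf_top hpow, mul_one, sub_self])
    (fun n k hk₁ hk₂ => by
      rw [pow_succ', ← mulVec_mulVec, cdf_mulVec_walk_of_mem p _ (by omega) hk₂,
        ← stationaryCdf_harmonic hp0 hq0 k]
      ring)
    hj₁ hj₂
  simpa using he.add_const (cdf u N * stationaryCdf N p j)

end Convergence

theorem cdr_tendsto_limit_general
    (N : ℕ) (x : ℝ) (hx0 : 0 < x) (hxN : x < N)
    (pA pB : ℝ) (hpAhalf : 1 / 2 < pA) (hpA1 : pA < 1)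
    (hsum : pA + pB = 1)
    (γ : ℝ)
    (μ : ℕ → St N → ℝ)
    (hμ1 : ∀ σ : Bool, ∀ i : Idx N, μ 1 (σ, i) = if (i : ℤ) = 0 then 1 / 2 else 0)
    (hμrec : ∀ n ≥ 1, μ (n + 1) = (Mmat N pA pB γ ⌊x⌋).mulVec (μ n))
    (CDR : ℕ → ℝ)
    (hCDR : ∀ n, CDR n =
      (∑ i : Idx N, if (i : ℤ) ≤ ⌊x⌋ then μ n (true, i) else 0) +
      (∑ i : Idx N, if (i : ℤ) ≤ -⌊x⌋ - 1 then μ n (false, i) else 0)) :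
    Filter.Tendsto CDR Filter.atTop
      (𝓝 ((2 * pA ^ (2 * N + 1)
            - pA ^ ((N : ℤ) - ⌊x⌋) * (1 - pA) ^ ((N : ℤ) + ⌊x⌋ + 1)
            - pA ^ ((N : ℤ) + ⌊x⌋ + 1) * (1 - pA) ^ ((N : ℤ) - ⌊x⌋))
          / (2 * (pA ^ (2 * N + 1) - (1 - pA) ^ (2 * N + 1))))) := by
  set ℓ := ⌊x⌋
  have hℓ0 : 0 ≤ ℓ := Int.floor_nonneg.mpr hx0.le
  have hℓN : ℓ < N := Int.floor_lt.mpr (by exact_mod_cast hxN)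
  set u : Idx N → ℝ := fun i => if (i : ℤ) = 0 then 1 / 2 else 0
  have hu : cdf u N = 1 / 2 := by
    rw [cdf, Finset.sum_eq_single (⟨0, by simp⟩ : Idx N)
      (fun i _ hi => by simp [u, Subtype.ext_iff.not.mp hi]) (by simp)]
    simp [u]
  have hμ := chain_eq_walk_pow_mulVec γ ℓ hsum μ u hμ1 hμrec
  have hCDR_succ : ∀ n, CDR (n + 1) =
      cdf (walk N pA ^ n *ᵥ u) ℓ + cdf (walk N pA ^ n *ᵥ u) (-ℓ - 1) := fun n => by
    rw [hCDR, hμ]; rfl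
  rw [← tendsto_add_atTop_iff_nat 1, funext hCDR_succ, ← stationaryCdf_average]
  convert (tendsto_cdf_walk_pow hpAhalf hpA1 u (j := ℓ) (by omega) (by omega)).add
    (tendsto_cdf_walk_pow hpAhalf hpA1 u (j := -ℓ - 1) (by omega) (by omega)) using 2
  rw [hu]
  ring

/-- Theorem (limiting correct decision rate when `p_A + p_B = 1`). -/
theorem cdr_tendsto_limit
    (N : ℕ) (hN : 0 < N) (x : ℝ) (hx0 : 0 < x) (hxN : x < N)
    (hxint : ∀ k : ℤ, (k : ℝ) ≠ x)
    (pA pB : ℝ) (hpAhalf : 1 / 2 < pA) (hpA1 : pA < 1) (hpB0 : 0 < pB) (hpB1 : pB < 1)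
    (hsum : pA + pB = 1)
    (γ : ℝ) (hγ0 : 0 < γ) (hγ1 : γ ≤ 1)
    (μ : ℕ → St N → ℝ)
    (hμ1 : ∀ σ : Bool, ∀ i : Idx N, μ 1 (σ, i) = if (i : ℤ) = 0 then 1 / 2 else 0)
    (hμrec : ∀ n ≥ 1, μ (n + 1) = (Mmat N pA pB γ ⌊x⌋).mulVec (μ n))
    (CDR : ℕ → ℝ)
    (hCDR : ∀ n, CDR n =
      (∑ i : Idx N, if (i : ℤ) ≤ ⌊x⌋ then μ n (true, i) else 0) +
      (∑ i : Idx N, if (i : ℤ) ≤ -⌊x⌋ - 1 then μ n (false, i) else 0)) :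
    Filter.Tendsto CDR Filter.atTop
      (𝓝 ((2 * pA ^ (2 * N + 1)
            - pA ^ ((N : ℤ) - ⌊x⌋) * (1 - pA) ^ ((N : ℤ) + ⌊x⌋ + 1)
            - pA ^ ((N : ℤ) + ⌊x⌋ + 1) * (1 - pA) ^ ((N : ℤ) - ⌊x⌋))
          / (2 * (pA ^ (2 * N + 1) - (1 - pA) ^ (2 * N + 1))))) :=
  cdr_tendsto_limit_general N x hx0 hxN pA pB hpAhalf hpA1 hsum γ μ hμ1 hμrec CDR hCDR
end

section
/- Let p ∈ (1/2,1), q = 1−p, and let u ∈ ℝ^{2N+1} be given by u_i = (p−q) p^{N−i} q^{N+i} / (p^{2N+1} − q^{2N+1}). Then for every probability vector w on {−N,...,N} (entries nonnegative, summing to 1), the iterates 𝒫^{n} w converge entrywise to u as n → ∞. -/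
open Matrix Finset Filter Topology

/-- The `(2N+1)×(2N+1)` threshold transition matrix `𝒫`: column `i` has entry `q` at
row `min(i+1, N)`, entry `p` at row `max(i-1, -N)`, and `0` elsewhere
(coinciding contributions are added). -/
noncomputable def Pmat (N : ℕ) (p q : ℝ) : Matrix (Idx N) (Idx N) ℝ :=
  fun j i =>
    (if (j : ℤ) = min ((i : ℤ) + 1) (N : ℤ) then q else 0) +
    (if (j : ℤ) = max ((i : ℤ) - 1) (-(N : ℤ)) then p else 0)

/-! The matrix `𝒫` is column-stochastic and `𝒫 ^ (4N+1)` has positive entries. Hence on vectors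
of zero sum `𝒫` does not expand the `ℓ¹` norm while `𝒫 ^ (4N+1)` contracts it by a factor `< 1`
(Doeblin's argument). The vector `u` is a probability vector in detailed balance,
`q u_k = p u_(k+1)`, so `𝒫 u = u`; and `𝒫 ^ n w - u = 𝒫 ^ n (w - u)` with `w - u` of zero sum. -/

lemma tendsto_zero_of_antitone_of_le_mul {e : ℕ → ℝ} (he : Antitone e) (he0 : ∀ n, 0 ≤ e n)
    {m : ℕ} {c : ℝ} (hc : c < 1) (hm : ∀ n, e (n + m) ≤ c * e n) :
    Tendsto e atTop (𝓝 0) := by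
  have hL := tendsto_atTop_ciInf he ⟨0, Set.forall_mem_range.2 he0⟩
  have hL0 : 0 ≤ ⨅ n, e n := le_ciInf he0
  have hLc : ⨅ n, e n ≤ c * ⨅ n, e n :=
    le_of_tendsto_of_tendsto' (hL.comp (tendsto_add_atTop_nat m)) (hL.const_mul c) hm
  rwa [show ⨅ n, e n = 0 by nlinarith] at hL

namespace Matrix

variable {ι : Type*} [Fintype ι]

lemma sum_abs_mulVec_le_of_le_apply {A : Matrix ι ι ℝ} {ε : ℝ} (hε : ∀ j i, ε ≤ A j i)
    (hA : ∀ i, ∑ j, A j i = 1) {x : ι → ℝ} (hx : ∑ i, x i = 0) :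
    ∑ j, |(A *ᵥ x) j| ≤ (1 - Fintype.card ι * ε) * ∑ i, |x i| := by
  -- subtracting `ε` from every entry does not change `A *ᵥ x`, since `x` sums to zero
  have hshift : ∀ j, (A *ᵥ x) j = ∑ i, (A j i - ε) * x i := fun j => by
    simp [mulVec, dotProduct, sub_mul, sum_sub_distrib, ← mul_sum, hx]
  calc ∑ j, |(A *ᵥ x) j| ≤ ∑ j, ∑ i, (A j i - ε) * |x i| := by
        refine sum_le_sum fun j _ => ?_
        rw [hshift]
        refine (abs_sum_le_sum_abs _ _).trans_eq (sum_congr rfl fun i _ => ?_)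
        rw [abs_mul, abs_of_nonneg (sub_nonneg.2 (hε j i))]
    _ = ∑ i, (1 - Fintype.card ι * ε) * |x i| := by
        rw [sum_comm]
        simp [← sum_mul, sum_sub_distrib, hA]
    _ = (1 - Fintype.card ι * ε) * ∑ i, |x i| := (mul_sum _ _ _).symm

lemma mul_apply_pos {A B : Matrix ι ι ℝ} (hA : ∀ j k, 0 ≤ A j k) (hB : ∀ k i, 0 ≤ B k i)
    {i j k : ι} (hjk : 0 < A j k) (hki : 0 < B k i) : 0 < (A * B) j i :=
  sum_pos' (fun l _ => mul_nonneg (hA j l) (hB l i)) ⟨k, mem_univ k, mul_pos hjk hki⟩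

lemma pow_apply_iterate_pos [DecidableEq ι] {A : Matrix ι ι ℝ} (hA : ∀ j i, 0 ≤ A j i)
    {f : ι → ι} (hf : ∀ i, 0 < A (f i) i) (n : ℕ) (i : ι) : 0 < (A ^ n) (f^[n] i) i := by
  induction n with
  | zero => simp
  | succ n ih =>
    rw [pow_succ', Function.iterate_succ_apply']
    exact mul_apply_pos hA (pow_apply_nonneg hA n) (hf _) ih

theorem tendsto_pow_mulVec_of_isPrimitive [DecidableEq ι] {P : Matrix ι ι ℝ}
    (hP : P ∈ colStochastic ℝ ι) (hprim : P.IsPrimitive) {u w : ι → ℝ} (hu : P *ᵥ u = u)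
    (hw : ∑ i, w i = ∑ i, u i) :
    Tendsto (fun n => (P ^ n) *ᵥ w) atTop (𝓝 u) := by
  rcases isEmpty_or_nonempty ι with hι | hι
  · simp [Subsingleton.elim _ u]
  obtain ⟨m, -, hm⟩ := hprim.exists_pos_pow
  set x := w - u
  have hPn : ∀ n, P ^ n ∈ colStochastic ℝ ι := pow_mem hP
  have hxn : ∀ n, ∑ i, (P ^ n *ᵥ x) i = 0 := fun n => by
    simp [sum_mulVec_of_mem_colStochastic (hPn n), x, sum_sub_distrib, hw]
  have hPnx : ∀ n, P ^ n *ᵥ w - u = P ^ n *ᵥ x := fun n => by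
    have hun : P ^ n *ᵥ u = u := by
      induction n with
      | zero => simp
      | succ n ih => rw [pow_succ, ← mulVec_mulVec, hu, ih]
    rw [mulVec_sub, hun]
  set e : ℕ → ℝ := fun n => ∑ j, |(P ^ n *ᵥ x) j|
  obtain ⟨⟨j₀, i₀⟩, hmin⟩ := Finite.exists_min fun ji : ι × ι => (P ^ m) ji.1 ji.2
  have he : Tendsto e atTop (𝓝 0) := by
    refine tendsto_zero_of_antitone_of_le_mul (m := m)
      (c := 1 - Fintype.card ι * (P ^ m) j₀ i₀) (antitone_nat_of_succ_le fun n => ?_)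
      (fun n => sum_nonneg fun j _ => abs_nonneg _) ?_ fun n => ?_
    · simpa [e, pow_succ', ← mulVec_mulVec] using
        sum_abs_mulVec_le_of_le_apply (fun j i => nonneg_of_mem_colStochastic hP)
          (sum_col_of_mem_colStochastic hP) (hxn n)
    · have : (0 : ℝ) < Fintype.card ι := Nat.cast_pos.2 Fintype.card_pos
      nlinarith [hm j₀ i₀]
    · simpa [e, add_comm n, pow_add, ← mulVec_mulVec] using
        sum_abs_mulVec_le_of_le_apply (A := P ^ m) (fun j i => hmin (j, i))
          (sum_col_of_mem_colStochastic (hPn m)) (hxn n)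
  refine tendsto_pi_nhds.2 fun i => ?_
  refine tendsto_iff_norm_sub_tendsto_zero.2
    (squeeze_zero (fun _ => norm_nonneg _) (fun n => ?_) he)
  rw [Real.norm_eq_abs, ← Pi.sub_apply, hPnx]
  exact single_le_sum (f := fun j => |(P ^ n *ᵥ x) j|) (fun j _ => abs_nonneg _) (mem_univ i)

end Matrix

variable {N : ℕ} {p q : ℝ}

lemma Pmat_nonneg (hp : 0 ≤ p) (hq : 0 ≤ q) (j i : Idx N) : 0 ≤ Pmat N p q j i := by
  unfold Pmat
  positivity

lemma Pmat_mem_colStochastic (hp : 0 ≤ p) (hq : 0 ≤ q) (hpq : p + q = 1) :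
    Pmat N p q ∈ colStochastic ℝ (Idx N) := by
  refine mem_colStochastic_iff_sum.2 ⟨Pmat_nonneg hp hq, fun i => ?_⟩
  obtain ⟨hlo, hhi⟩ := mem_Icc.1 i.2
  simp only [Pmat, sum_add_distrib]
  rw [sum_coe_sort (Icc (-(N : ℤ)) N) fun j => if j = min ((i : ℤ) + 1) N then q else 0,
    sum_coe_sort (Icc (-(N : ℤ)) N) fun j => if j = max ((i : ℤ) - 1) (-N) then p else 0,
    sum_ite_eq', sum_ite_eq', if_pos (mem_Icc.2 (by omega)), if_pos (mem_Icc.2 (by omega))]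
  linarith

def stepUp (i : Idx N) : Idx N :=
  ⟨min ((i : ℤ) + 1) N, mem_Icc.2 (by have := mem_Icc.1 i.2; omega)⟩

def stepDown (i : Idx N) : Idx N :=
  ⟨max ((i : ℤ) - 1) (-N), mem_Icc.2 (by have := mem_Icc.1 i.2; omega)⟩

lemma stepUp_iterate_coe (n : ℕ) (i : Idx N) :
    ((stepUp^[n] i : Idx N) : ℤ) = min ((i : ℤ) + n) N := by
  induction n with
  | zero => simpa using (mem_Icc.1 i.2).2
  | succ n ih =>
    rw [Function.iterate_succ_apply']
    change min (((stepUp^[n] i : Idx N) : ℤ) + 1) N = _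
    rw [ih]
    push_cast
    omega

lemma stepDown_iterate_coe (n : ℕ) (i : Idx N) :
    ((stepDown^[n] i : Idx N) : ℤ) = max ((i : ℤ) - n) (-N) := by
  induction n with
  | zero => simpa using (mem_Icc.1 i.2).1
  | succ n ih =>
    rw [Function.iterate_succ_apply']
    change max (((stepDown^[n] i : Idx N) : ℤ) - 1) (-N) = _
    rw [ih]
    push_cast
    omega

lemma Pmat_stepUp_pos (hp : 0 ≤ p) (hq : 0 < q) (i : Idx N) :
    0 < Pmat N p q (stepUp i) i := by
  rw [Pmat, if_pos (show ((stepUp i : Idx N) : ℤ) = min ((i : ℤ) + 1) N from rfl)]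
  positivity

lemma Pmat_stepDown_pos (hp : 0 < p) (hq : 0 ≤ q) (i : Idx N) :
    0 < Pmat N p q (stepDown i) i := by
  rw [Pmat, if_pos (show ((stepDown i : Idx N) : ℤ) = max ((i : ℤ) - 1) (-N) from rfl)]
  positivity

theorem Pmat_isPrimitive (hp : 0 < p) (hq : 0 < q) : (Pmat N p q).IsPrimitive := by
  refine ⟨Pmat_nonneg hp.le hq.le, 4 * N + 1, by omega, fun j i => ?_⟩
  have hj := mem_Icc.1 j.2
  have hi := mem_Icc.1 i.2
  -- climb from `i` to the top `N`, idle there, then descend to `j`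
  set a := (3 * (N : ℤ) + 1 + j).toNat
  set b := ((N : ℤ) - j).toNat
  have htop : ((stepUp^[a] i : Idx N) : ℤ) = N := by rw [stepUp_iterate_coe]; omega
  have hpath : stepDown^[b] (stepUp^[a] i) = j := by
    ext
    rw [stepDown_iterate_coe, htop]
    omega
  rw [show 4 * N + 1 = b + a by omega, pow_add, ← hpath]
  exact mul_apply_pos (pow_apply_nonneg (Pmat_nonneg hp.le hq.le) b)
    (pow_apply_nonneg (Pmat_nonneg hp.le hq.le) a)
    (pow_apply_iterate_pos (Pmat_nonneg hp.le hq.le) (Pmat_stepDown_pos hp hq.le) b _)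
    (pow_apply_iterate_pos (Pmat_nonneg hp.le hq.le) (Pmat_stepUp_pos hp.le hq) a i)

lemma sum_Icc_ite_eq_min_add_one {j : ℤ} (hj : j ∈ Icc (-(N : ℤ)) N) (f : ℤ → ℝ) :
    ∑ i ∈ Icc (-(N : ℤ)) N, (if j = min (i + 1) N then f i else 0) =
      (if -(N : ℤ) < j then f (j - 1) else 0) + (if j = N then f N else 0) := by
  rw [mem_Icc] at hj
  have hsplit : ∀ i ∈ Icc (-(N : ℤ)) N, (if j = min (i + 1) N then f i else 0) =
      (if j - 1 = i then f i else 0) +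
        (if (N : ℤ) = i then (if j = N then f i else 0) else 0) := by
    intro i hi
    rw [mem_Icc] at hi
    split_ifs <;> first | (exfalso; omega) | simp
  rw [sum_congr rfl hsplit, sum_add_distrib, sum_ite_eq, sum_ite_eq]
  have hmem : j - 1 ∈ Icc (-(N : ℤ)) N ↔ -(N : ℤ) < j := by rw [mem_Icc]; omega
  simp [hmem]

lemma sum_Icc_ite_eq_max_sub_one {j : ℤ} (hj : j ∈ Icc (-(N : ℤ)) N) (f : ℤ → ℝ) :
    ∑ i ∈ Icc (-(N : ℤ)) N, (if j = max (i - 1) (-N) then f i else 0) =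
      (if j < N then f (j + 1) else 0) + (if j = -N then f (-N) else 0) := by
  rw [mem_Icc] at hj
  have hsplit : ∀ i ∈ Icc (-(N : ℤ)) N, (if j = max (i - 1) (-N) then f i else 0) =
      (if j + 1 = i then f i else 0) +
        (if -(N : ℤ) = i then (if j = -N then f i else 0) else 0) := by
    intro i hi
    rw [mem_Icc] at hi
    split_ifs <;> first | (exfalso; omega) | simp
  rw [sum_congr rfl hsplit, sum_add_distrib, sum_ite_eq, sum_ite_eq]
  have hmem : j + 1 ∈ Icc (-(N : ℤ)) N ↔ j < N := by rw [mem_Icc]; omega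
  simp [hmem]

lemma Pmat_mulVec_apply (f : ℤ → ℝ) (j : Idx N) :
    (Pmat N p q *ᵥ fun i : Idx N => f i) j =
      q * ∑ i ∈ Icc (-(N : ℤ)) N, (if (j : ℤ) = min (i + 1) N then f i else 0) +
      p * ∑ i ∈ Icc (-(N : ℤ)) N, (if (j : ℤ) = max (i - 1) (-N) then f i else 0) := by
  simp only [mulVec, dotProduct, Pmat, add_mul, ite_mul, zero_mul, sum_add_distrib, mul_sum,
    mul_ite, mul_zero]
  rw [sum_coe_sort (Icc (-(N : ℤ)) N) fun i => if (j : ℤ) = min (i + 1) N then q * f i else 0,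
    sum_coe_sort (Icc (-(N : ℤ)) N) fun i => if (j : ℤ) = max (i - 1) (-N) then p * f i else 0]

theorem Pmat_mulVec_eq_self_of_detailed_balance (hpq : p + q = 1) {f : ℤ → ℝ}
    (hf : ∀ k, q * f k = p * f (k + 1)) :
    (Pmat N p q *ᵥ fun i : Idx N => f i) = fun i : Idx N => f i := by
  funext j
  rw [Pmat_mulVec_apply, sum_Icc_ite_eq_min_add_one j.2, sum_Icc_ite_eq_max_sub_one j.2]
  obtain ⟨hlo, hhi⟩ := mem_Icc.1 j.2
  generalize (j : ℤ) = k at hlo hhi ⊢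
  have hin : q * f (k - 1) = p * f k := by simpa using hf (k - 1)
  have hout : q * f k = p * f (k + 1) := hf k
  rcases hlo.eq_or_lt with rfl | hlo <;> rcases hhi.eq_or_lt with hhi | hhi
  · have hN : N = 0 := by omega
    subst hN
    simp only [CharP.cast_eq_zero, neg_zero, lt_self_iff_false, ↓reduceIte, zero_add]
    linear_combination f 0 * hpq
  · have hN : N ≠ 0 := by omega
    simp only [lt_self_iff_false, ↓reduceIte, Nat.neg_cast_eq_cast, hN, and_self, add_zero,
      mul_zero, hhi, zero_add]
    linear_combination f (-N) * hpq - hout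
  · subst hhi
    have hN : N ≠ 0 := by omega
    simp only [hlo, ↓reduceIte, lt_self_iff_false, Nat.cast_eq_neg_cast, hN, and_self, add_zero,
      mul_zero]
    linear_combination hin + f N * hpq
  · simp only [hlo, ↓reduceIte, hhi.ne, add_zero, hhi, hlo.ne']
    linear_combination hin - hout + f k * hpq

noncomputable def stationaryProfile (N : ℕ) (p q : ℝ) (k : ℤ) : ℝ :=
  (p - q) * p ^ ((N : ℤ) - k) * q ^ ((N : ℤ) + k) / (p ^ (2 * N + 1) - q ^ (2 * N + 1))

lemma stationaryProfile_detailed_balance (hp : p ≠ 0) (hq : q ≠ 0) (k : ℤ) :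
    q * stationaryProfile N p q k = p * stationaryProfile N p q (k + 1) := by
  rw [stationaryProfile, stationaryProfile, show (N : ℤ) - k = N - (k + 1) + 1 by ring,
    zpow_add_one₀ hp, show (N : ℤ) + (k + 1) = N + k + 1 by ring, zpow_add_one₀ hq]
  ring

lemma sum_stationaryProfile (hp : p ≠ 0) (hq : q ≠ 0) (hpq : p ≠ q) :
    ∑ k ∈ Icc (-(N : ℤ)) N, stationaryProfile N p q k = 1 := by
  have hD : p ^ (2 * N + 1) - q ^ (2 * N + 1) ≠ 0 :=
    sub_ne_zero.2 fun h => hpq ((Odd.pow_inj (odd_two_mul_add_one N)).1 h)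
  -- the summands telescope
  set g : ℤ → ℝ := fun k => p ^ ((N : ℤ) - k + 1) * q ^ ((N : ℤ) + k)
  have hg : ∀ k, stationaryProfile N p q k =
      (g k - g (k + 1)) / (p ^ (2 * N + 1) - q ^ (2 * N + 1)) := by
    intro k
    simp only [g]
    rw [show (N : ℤ) - (k + 1) + 1 = N - k by ring, zpow_add_one₀ hp,
      show (N : ℤ) + (k + 1) = N + k + 1 by ring, zpow_add_one₀ hq, stationaryProfile]
    ring
  have hbot : g (-N) = p ^ (2 * N + 1) := by
    simp only [g]
    rw [show (N : ℤ) - -N + 1 = (2 * N + 1 : ℕ) by push_cast; ring, add_neg_cancel, zpow_natCast,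
      zpow_zero, mul_one]
  have htop : g (N + 1) = q ^ (2 * N + 1) := by
    simp only [g]
    rw [show (N : ℤ) - (N + 1) + 1 = 0 by ring, show (N : ℤ) + (N + 1) = (2 * N + 1 : ℕ) by
      push_cast; ring, zpow_natCast, zpow_zero, one_mul]
  simp_rw [hg, ← sum_div]
  rw [sum_Icc_eq_sum_Ico_add _ (by omega), sum_Ico_int_sub, hbot, htop, sub_add_sub_cancel,
    div_self hD]

theorem Pmat_iterates_tendsto_stationary_general
    (N : ℕ) (p q : ℝ) (hp : 1 / 2 < p) (hp1 : p < 1) (hq : q = 1 - p)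
    (u : Idx N → ℝ)
    (hu : ∀ i : Idx N,
      u i = (p - q) * p ^ ((N : ℤ) - (i : ℤ)) * q ^ ((N : ℤ) + (i : ℤ))
              / (p ^ (2 * N + 1) - q ^ (2 * N + 1)))
    (w : Idx N → ℝ) (hw1 : ∑ i : Idx N, w i = 1) :
    ∀ i : Idx N,
      Filter.Tendsto (fun n : ℕ => ((Pmat N p q) ^ n).mulVec w i) Filter.atTop (𝓝 (u i)) := by
  have hp0 : 0 < p := by linarith
  have hq0 : 0 < q := by linarith
  have hpq : p + q = 1 := by linarith
  have hu_eq : u = fun i : Idx N => stationaryProfile N p q i := funext hu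
  have hstat : Pmat N p q *ᵥ u = u := hu_eq ▸ Pmat_mulVec_eq_self_of_detailed_balance hpq
    (stationaryProfile_detailed_balance hp0.ne' hq0.ne')
  have hsum : ∑ i, u i = 1 := by
    rw [hu_eq, sum_coe_sort (Icc (-(N : ℤ)) N) (stationaryProfile N p q)]
    exact sum_stationaryProfile hp0.ne' hq0.ne' (by linarith)
  exact tendsto_pi_nhds.1 <| tendsto_pow_mulVec_of_isPrimitive
    (Pmat_mem_colStochastic hp0.le hq0.le hpq) (Pmat_isPrimitive hp0 hq0) hstat
    (hw1.trans hsum.symm)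

/-- Theorem: for every probability vector `w` on `{-N,...,N}`, the iterates `𝒫^n w`
converge entrywise to the stationary vector `u`. -/
theorem Pmat_iterates_tendsto_stationary
    (N : ℕ) (hN : 0 < N) (p q : ℝ) (hp : 1 / 2 < p) (hp1 : p < 1) (hq : q = 1 - p)
    (u : Idx N → ℝ)
    (hu : ∀ i : Idx N,
      u i = (p - q) * p ^ ((N : ℤ) - (i : ℤ)) * q ^ ((N : ℤ) + (i : ℤ))
              / (p ^ (2 * N + 1) - q ^ (2 * N + 1)))
    (w : Idx N → ℝ) (hw0 : ∀ i, 0 ≤ w i) (hw1 : ∑ i : Idx N, w i = 1) :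
    ∀ i : Idx N,
      Filter.Tendsto (fun n : ℕ => ((Pmat N p q) ^ n).mulVec w i) Filter.atTop (𝓝 (u i)) :=
  Pmat_iterates_tendsto_stationary_general N p q hp hp1 hq u hu w hw1
end
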